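/- For an odd prime p, (sum_{i=0}^{p-1} p*(-1)^i/(2i-1))^2 ≡ 1 + 4p*(-1)^((p-1)/2) + 4p^2 - p^2 * sum_{k=1}^{(p-3)/2} (-1)^k/k^2 (mod p^3). -/

import Mathlib

/-!
Write `p = 2m + 3` and `s = (-1)^m`. In `S = ∑_{i<p} p (-1)^i / (2i - 1)` the terms `i = 0, 1`
give `-2p`, the centre `i = m + 2` (where `2i - 1 = p`) gives `s`, and the terms `i = m + 2 ∓ j`,
`1 ≤ j ≤ m`, have denominators `p ∓ 2j` and pair up to
`s (-1)^j · 2p² / (p² - 4j²) = s (-1)^j (-p² / (2j²) + p⁴ / (2j² (p² - 4j²)))`.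
So `S = s - 2p - s p² B / 2 + s p⁴ T / 2` with `B = ∑_{j ≤ m} (-1)^j / j²` and `T` a sum whose
denominators are prime to `p`; squaring and using `s² = 1`, the difference of the two sides is
`p³` times a `p`-integral rational.
-/

open Finset

theorem Finset.sum_range_two_mul_add_one {M : Type*} [AddCommMonoid M] (g : ℕ → M) (m : ℕ) :
    ∑ i ∈ range (2 * m + 1), g i = g m + ∑ j ∈ Icc 1 m, (g (m - j) + g (m + j)) := by
  rw [← Ico_add_one_right_eq_Icc, sum_Ico_eq_sum_range, sum_add_distrib,
    show 2 * m + 1 = m + 1 + m by ring, sum_range_add, sum_range_succ, ← sum_range_reflect]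
  simp only [Nat.add_sub_cancel, Nat.sub_sub, add_comm 1, add_assoc]
  abel

theorem neg_one_pow_sub {R : Type*} [Monoid R] [HasDistribNeg R] {m j : ℕ} (h : j ≤ m) :
    (-1 : R) ^ (m - j) = (-1) ^ m * (-1) ^ j := by
  obtain ⟨k, rfl⟩ := Nat.exists_eq_add_of_le h
  rw [Nat.add_sub_cancel_left, pow_add, mul_assoc, ((Commute.refl _).pow_pow k j).eq, ← mul_assoc,
    ← pow_add, Even.neg_one_pow ⟨j, rfl⟩, one_mul]

theorem div_sub_add_div_add {K : Type*} [Field K] [NeZero (2 : K)] {P x : K} (hx : x ≠ 0)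
    (hsub : P - 2 * x ≠ 0) (hadd : P + 2 * x ≠ 0) :
    P / (P - 2 * x) + P / (P + 2 * x) =
      -P ^ 2 / (2 * x ^ 2) + P ^ 4 / (2 * x ^ 2 * (P ^ 2 - 4 * x ^ 2)) := by
  rw [show P ^ 2 - 4 * x ^ 2 = (P - 2 * x) * (P + 2 * x) by ring]
  field_simp
  ring

section PIntegral

variable {p : ℕ} [Fact p.Prime]

theorem inv_intCast_mem_integer_padicValuation {x : ℤ} (hx : ¬(p : ℤ) ∣ x) :
    (x : ℚ)⁻¹ ∈ (Rat.padicValuation p).integer := by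
  rw [Valuation.mem_integer_iff, map_inv₀, Rat.padicValuation_cast,
    Int.padicValuation_eq_one_iff.mpr hx, inv_one]

theorem inv_natCast_mem_integer_padicValuation {y : ℕ} (hy0 : 0 < y) (hyp : y < p) :
    (y : ℚ)⁻¹ ∈ (Rat.padicValuation p).integer := by
  exact_mod_cast inv_intCast_mem_integer_padicValuation
    (Int.natCast_dvd_natCast.not.mpr (Nat.not_dvd_of_pos_of_lt hy0 hyp))

theorem exists_mul_eq_intCast_of_mem_integer_padicValuation {q : ℚ}
    (hq : q ∈ (Rat.padicValuation p).integer) :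
    ∃ a b : ℤ, b ≠ 0 ∧ ¬(p : ℤ) ∣ b ∧ q * b = a :=
  ⟨q.num, q.den, by simp, by exact_mod_cast Rat.padicValuation_le_one_iff.mp hq,
    Rat.mul_den_eq_num q⟩

theorem Int.not_natCast_dvd_sq_sub_sq {y : ℕ} (hy0 : 0 < y) (hyp : y < p) :
    ¬(p : ℤ) ∣ (p : ℤ) ^ 2 - (y : ℤ) ^ 2 := by
  intro h
  have hy : (p : ℤ) ∣ (y : ℤ) ^ 2 := by
    simpa using (dvd_pow_self (p : ℤ) two_ne_zero).sub h
  exact Nat.not_dvd_of_pos_of_lt hy0 hyp <| Int.natCast_dvd_natCast.mp <|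
    (Nat.prime_iff_prime_int.mp Fact.out).dvd_of_dvd_pow hy

theorem sum_neg_one_pow_div_sq_mem_integer {m : ℕ} (hm : m < p) :
    ∑ j ∈ Icc 1 m, (-1 : ℚ) ^ j / (j : ℚ) ^ 2 ∈ (Rat.padicValuation p).integer :=
  sum_mem fun j hj => by
    obtain ⟨hj1, hjm⟩ := mem_Icc.mp hj
    rw [div_eq_mul_inv, ← inv_pow]
    exact mul_mem (pow_mem (neg_mem (one_mem _)) _)
      (pow_mem (inv_natCast_mem_integer_padicValuation hj1 (by omega)) _)

theorem sum_neg_one_pow_div_sq_mul_sq_sub_mem_integer {m : ℕ} (hm : 2 * m < p) :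
    ∑ j ∈ Icc 1 m, (-1 : ℚ) ^ j / ((j : ℚ) ^ 2 * ((p : ℚ) ^ 2 - 4 * (j : ℚ) ^ 2)) ∈
      (Rat.padicValuation p).integer :=
  sum_mem fun j hj => by
    obtain ⟨hj1, hjm⟩ := mem_Icc.mp hj
    have hcast : (p : ℚ) ^ 2 - 4 * (j : ℚ) ^ 2 =
        (((p : ℤ) ^ 2 - ((2 * j : ℕ) : ℤ) ^ 2 : ℤ) : ℚ) := by
      push_cast; ring
    rw [div_eq_mul_inv, mul_inv, ← inv_pow, hcast]
    exact mul_mem (pow_mem (neg_mem (one_mem _)) _)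
      (mul_mem (pow_mem (inv_natCast_mem_integer_padicValuation hj1 (by omega)) _)
        (inv_intCast_mem_integer_padicValuation
          (Int.not_natCast_dvd_sq_sub_sq (by omega) (by omega))))

end PIntegral

theorem sum_range_mul_neg_one_pow_div_two_mul_sub_one {p m : ℕ} (hp : p = 2 * m + 3) :
    ∑ i ∈ range p, (p : ℚ) * (-1) ^ i / (2 * (i : ℚ) - 1) =
      (-1) ^ m - 2 * p -
        (-1) ^ m * (p : ℚ) ^ 2 / 2 * ∑ j ∈ Icc 1 m, (-1) ^ j / (j : ℚ) ^ 2 +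
        (-1) ^ m * (p : ℚ) ^ 4 / 2 *
          ∑ j ∈ Icc 1 m, (-1) ^ j / ((j : ℚ) ^ 2 * ((p : ℚ) ^ 2 - 4 * (j : ℚ) ^ 2)) := by
  have hP : (p : ℚ) = 2 * m + 3 := by rw [hp]; push_cast; ring
  have hpair : ∀ j ∈ Icc 1 m,
      p * (-1) ^ (m - j + 2) / (2 * ((m - j + 2 : ℕ) : ℚ) - 1) +
        p * (-1) ^ (m + j + 2) / (2 * ((m + j + 2 : ℕ) : ℚ) - 1) =
      -((-1) ^ m * (p : ℚ) ^ 2 / 2 * ((-1) ^ j / (j : ℚ) ^ 2)) +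
        (-1) ^ m * (p : ℚ) ^ 4 / 2 *
          ((-1) ^ j / ((j : ℚ) ^ 2 * ((p : ℚ) ^ 2 - 4 * (j : ℚ) ^ 2))) := by
    intro j hj
    obtain ⟨hj1, hjm⟩ := mem_Icc.mp hj
    have hsub : 2 * ((m - j + 2 : ℕ) : ℚ) - 1 = p - 2 * j := by
      rw [hP]; push_cast [Nat.cast_sub hjm]; ring
    have hadd : 2 * ((m + j + 2 : ℕ) : ℚ) - 1 = p + 2 * j := by
      rw [hP]; push_cast; ring
    have hj0 : (j : ℚ) ≠ 0 := by positivity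
    have hpsub : (p : ℚ) - 2 * j ≠ 0 := by
      have : (2 : ℚ) ≤ ((m - j + 2 : ℕ) : ℚ) := by exact_mod_cast Nat.le_add_left 2 _
      rw [← hsub]
      linarith
    have hpadd : (p : ℚ) + 2 * j ≠ 0 := by positivity
    calc p * (-1) ^ (m - j + 2) / (2 * ((m - j + 2 : ℕ) : ℚ) - 1) +
          p * (-1) ^ (m + j + 2) / (2 * ((m + j + 2 : ℕ) : ℚ) - 1)
        = (-1) ^ m * (-1) ^ j * (p / (p - 2 * j) + p / (p + 2 * j)) := by
          rw [hsub, hadd, pow_add, pow_add, pow_add, neg_one_pow_sub hjm]; ring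
      _ = _ := by rw [div_sub_add_div_add hj0 hpsub hpadd]; field_simp
  have hcenter : p * (-1) ^ (m + 1 + 1) / (2 * ((m + 1 + 1 : ℕ) : ℚ) - 1) = (-1 : ℚ) ^ m := by
    have hp0 : (p : ℚ) ≠ 0 := by rw [hP]; positivity
    rw [show 2 * ((m + 1 + 1 : ℕ) : ℚ) - 1 = p by rw [hP]; push_cast; ring,
      mul_div_cancel_left₀ _ hp0]
    ring
  rw [show range p = range (2 * m + 1 + 2) by rw [hp], sum_range_succ', sum_range_succ',
    sum_range_two_mul_add_one, sum_congr rfl hpair,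
    sum_add_distrib, sum_neg_distrib, ← mul_sum, ← mul_sum, hcenter]
  push_cast
  ring

theorem stmt_15 (p : ℕ) (hp : p.Prime) (hodd : Odd p) :
    ∃ a b : ℤ, b ≠ 0 ∧ ¬ (p : ℤ) ∣ b ∧
      ((∑ i ∈ Finset.range p, (p : ℚ) * (-1) ^ i / (2 * (i : ℚ) - 1)) ^ 2 -
          (1 + 4 * (p : ℚ) * (-1) ^ ((p - 1) / 2) + 4 * (p : ℚ) ^ 2 -
            (p : ℚ) ^ 2 * ∑ k ∈ Finset.Icc 1 ((p - 3) / 2),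
              (-1 : ℚ) ^ k / (k : ℚ) ^ 2)) * (b : ℚ) =
        (p : ℚ) ^ 3 * (a : ℚ) := by
  have : Fact p.Prime := ⟨hp⟩
  obtain ⟨m, hm⟩ : ∃ m, p = 2 * m + 3 := by
    obtain ⟨k, rfl⟩ := hodd
    exact ⟨k - 1, by have := hp.two_le; omega⟩
  rw [show (p - 1) / 2 = m + 1 by omega, show (p - 3) / 2 = m by omega,
    sum_range_mul_neg_one_pow_div_two_mul_sub_one hm]
  set s : ℚ := (-1) ^ m
  set B := ∑ j ∈ Icc 1 m, (-1 : ℚ) ^ j / (j : ℚ) ^ 2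
  set T := ∑ j ∈ Icc 1 m, (-1 : ℚ) ^ j / ((j : ℚ) ^ 2 * ((p : ℚ) ^ 2 - 4 * (j : ℚ) ^ 2))
  have hs : s ∈ (Rat.padicValuation p).integer := pow_mem (neg_mem (one_mem _)) _
  have hB : B ∈ (Rat.padicValuation p).integer := sum_neg_one_pow_div_sq_mem_integer (by omega)
  have hT : T ∈ (Rat.padicValuation p).integer :=
    sum_neg_one_pow_div_sq_mul_sq_sub_mem_integer (by omega)
  have hhalf : (2 : ℚ)⁻¹ ∈ (Rat.padicValuation p).integer := by
    exact_mod_cast inv_natCast_mem_integer_padicValuation two_pos (by omega)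
  -- `(S² - rhs) / p³`, expanded via `S = X + s p⁴ T / 2` with `X = s - 2p - s p² B / 2`
  obtain ⟨a, b, hb0, hpb, hab⟩ := exists_mul_eq_intCast_of_mem_integer_padicValuation
    (q := 2 * s * B + p * 2⁻¹ ^ 2 * B ^ 2 + s * p * T * (s - 2 * p - s * p ^ 2 * B * 2⁻¹) +
      p ^ 5 * 2⁻¹ ^ 2 * T ^ 2)
    (by apply_rules [add_mem, sub_mem, mul_mem, pow_mem, natCast_mem, ofNat_mem])
  refine ⟨a, b, hb0, hpb, ?_⟩
  have hs2 : s ^ 2 = 1 := by rw [← pow_mul, mul_comm, pow_mul, neg_one_sq, one_pow]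
  rw [← hab]
  linear_combination (b : ℚ) * (1 - p ^ 2 * B + p ^ 4 * B ^ 2 / 4 + p ^ 8 * T ^ 2 / 4) * hs2
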